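/- Let σ = (√5 − 1)/2 and define S_n = σ^(n−5)·((4n−2)σ + 3 − 2n). Then S_8 > 1 and S_9 < 1. -/

import Mathlib

noncomputable def σ : ℝ := (Real.sqrt 5 - 1) / 2

noncomputable def S (n : ℕ) : ℝ := σ ^ ((n : ℤ) - 5) * ((4 * (n : ℝ) - 2) * σ + 3 - 2 * n)

/-! Reducing powers of `σ` with `σ² = 1 - σ` makes `S 8` and `S 9` affine in `σ`, and both
inequalities become upper bounds on `σ`, which follow from `σ² + σ = 1` because `x² + x` is
increasing on `x > 0`. -/

lemma σ_pos : 0 < σ := by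
  have : 1 < Real.sqrt 5 := by
    rw [Real.lt_sqrt zero_le_one]
    norm_num
  unfold σ
  linarith

lemma σ_sq_add_self : σ ^ 2 + σ = 1 := by
  have h5 : Real.sqrt 5 ^ 2 = 5 := Real.sq_sqrt (by norm_num)
  unfold σ
  linear_combination h5 / 4

lemma σ_lt : σ < 133 / 215 := by
  nlinarith [σ_sq_add_self, σ_pos]

lemma S_eight : S 8 = 73 - 116 * σ := by
  rw [S, show ((8 : ℕ) : ℤ) - 5 = (3 : ℕ) by norm_num, zpow_natCast]
  linear_combination (30 * σ ^ 2 - 43 * σ + 73) * σ_sq_add_self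

lemma S_nine : S 9 = 215 * σ - 132 := by
  rw [S, show ((9 : ℕ) : ℤ) - 5 = (4 : ℕ) by norm_num, zpow_natCast]
  linear_combination (34 * σ ^ 3 - 49 * σ ^ 2 + 83 * σ - 132) * σ_sq_add_self

theorem stmt_10 : S 8 > 1 ∧ S 9 < 1 := by
  rw [S_eight, S_nine]
  constructor <;> linarith [σ_lt]
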